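/- arXiv:0809.0178 — 3 statements merged into one kernel-verified Lean document; each statement's English description precedes it below -/
import Mathlib

section
/- Let Λ_k : ℝ → ℝ be the even piecewise-linear function with vertices at points (i, b_i) for i = -k, ..., k, where b_{-i} = b_i, b_k = 0, and b_i = 2 C(2k,k)^{-1} Σ_{j=i+1}^{k} C(2k, k-j) (-1)^{j+1} (1/j)(1 - i/j) for 0 ≤ i ≤ k-1. Then b_0 satisfies 0 < b_0 < 2 ln 2. -/
/-!
For `m ≤ n`, `∑_{j=1}^m (-1)^(j+1) C(n, m-j) / j = C(n, m) (H_n - H_{n-m})`: both sides satisfy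
Pascal's recurrence in `n`, and at `m = n + 1` the left side equals `1 / (n + 1)` by the vanishing
of the alternating binomial sum. Hence `b₀ = 2 (H_{2k} - H_k) = 2 ∑_{i=k+1}^{2k} 1/i`, which is
positive, and is less than `2 log 2` because `1/(i+1) < log (i+1) - log i` telescopes to `log 2`.
-/

open Finset

lemma sum_Icc_one_eq_sum_range {M : Type*} [AddCommMonoid M] (f : ℕ → M) (n : ℕ) :
    ∑ j ∈ Icc 1 n, f j = ∑ i ∈ range n, f (i + 1) := by
  rw [range_eq_Ico, sum_Ico_add' f 0 n 1, zero_add, Ico_add_one_right_eq_Icc]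

def altChooseSum (n m : ℕ) : ℚ :=
  ∑ j ∈ Icc 1 m, (-1) ^ (j + 1) * n.choose (m - j) / j

lemma altChooseSum_self_succ (n : ℕ) : altChooseSum n (n + 1) = 1 / (n + 1) := by
  have alternating : ∑ i ∈ range (n + 2), (-1 : ℚ) ^ i * (n + 1).choose i = 0 := by
    exact_mod_cast Int.alternating_sum_range_choose_of_ne n.succ_ne_zero
  have absorb : ∀ i ∈ range (n + 1), (-1 : ℚ) ^ (i + 1 + 1) * n.choose (n + 1 - (i + 1)) / ↑(i + 1)
      * (n + 1) = -((-1) ^ (i + 1) * (n + 1).choose (i + 1)) := by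
    intro i hi
    rw [Nat.add_sub_add_right, Nat.choose_symm (mem_range_succ_iff.1 hi)]
    have : ((n + 1) * n.choose i : ℚ) = (n + 1).choose (i + 1) * (i + 1) := by
      exact_mod_cast Nat.add_one_mul_choose_eq n i
    push_cast
    field_simp
    linear_combination (-1 : ℚ) ^ i * this
  rw [sum_range_succ'] at alternating
  rw [altChooseSum, sum_Icc_one_eq_sum_range, eq_div_iff (by positivity), sum_mul,
    sum_congr rfl absorb, sum_neg_distrib]
  simp only [pow_zero, Nat.choose_zero_right, Nat.cast_one, mul_one] at alternating
  linarith

lemma altChooseSum_succ_succ (n m : ℕ) :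
    altChooseSum (n + 1) (m + 1) = altChooseSum n (m + 1) + altChooseSum n m := by
  have pascal : ∀ j ∈ Icc 1 m, (-1 : ℚ) ^ (j + 1) * (n + 1).choose (m + 1 - j) / j =
      (-1) ^ (j + 1) * n.choose (m + 1 - j) / j + (-1) ^ (j + 1) * n.choose (m - j) / j := by
    intro j hj
    rw [Nat.sub_add_comm (mem_Icc.1 hj).2, Nat.choose_succ_succ']
    push_cast
    ring
  simp only [altChooseSum, sum_Icc_succ_top (Nat.le_add_left 1 m), sum_congr rfl pascal,
    sum_add_distrib, Nat.sub_self, Nat.choose_zero_right]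
  ring

theorem altChooseSum_eq {n m : ℕ} (h : m ≤ n) :
    altChooseSum n m = n.choose m * (harmonic n - harmonic (n - m)) := by
  induction n generalizing m with
  | zero => simp [Nat.le_zero.1 h, altChooseSum]
  | succ n ih =>
    rcases m with _ | m
    · simp [altChooseSum]
    rw [altChooseSum_succ_succ]
    rcases (Nat.le_of_lt_succ h).lt_or_eq with hlt | rfl
    · obtain ⟨r, hr⟩ : ∃ r, n - m = r + 1 := ⟨n - (m + 1), by omega⟩
      have absorb : (n.choose (m + 1) * (n + 1) : ℚ) = (n + 1).choose (m + 1) * (r + 1) := by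
        have := Nat.choose_mul_succ_eq n (m + 1)
        rw [show n + 1 - (m + 1) = r + 1 by omega] at this
        exact_mod_cast this
      rw [ih (m := m + 1) hlt, ih hlt.le, hr, show n + 1 - (m + 1) = r + 1 by omega,
        show n - (m + 1) = r by omega, harmonic_succ n, harmonic_succ r]
      have pascal : ((n + 1).choose (m + 1) : ℚ) = n.choose m + n.choose (m + 1) := by
        exact_mod_cast Nat.choose_succ_succ' n m
      push_cast at absorb ⊢
      field_simp
      linear_combination absorb + (n + 1 - (harmonic n - harmonic r) * (n + 1) * (r + 1)) * pascal
    · rw [altChooseSum_self_succ, ih le_rfl]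
      simp only [Nat.choose_self, Nat.sub_self, harmonic_zero, harmonic_succ]
      push_cast
      ring

theorem harmonic_strictMono : StrictMono harmonic :=
  strictMono_nat_of_lt_succ fun n => by rw [harmonic_succ, lt_add_iff_pos_right]; positivity

lemma inv_add_one_lt_log_add_one_sub_log {x : ℝ} (hx : 0 < x) :
    (x + 1)⁻¹ < Real.log (x + 1) - Real.log x := by
  have key := Real.log_lt_sub_one_of_pos (x := x / (x + 1)) (by positivity)
    (by rw [ne_eq, div_eq_one_iff_eq (by positivity)]; linarith)
  rw [Real.log_div hx.ne' (by positivity)] at key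
  have : x / (x + 1) - 1 = -(x + 1)⁻¹ := by field_simp; ring
  linarith

theorem harmonic_sub_harmonic_lt_log_div {m n : ℕ} (hm : 0 < m) (hmn : m < n) :
    ((harmonic n - harmonic m : ℚ) : ℝ) < Real.log (n / m) := by
  have hm' : (0 : ℝ) < m := by exact_mod_cast hm
  induction n, hmn using Nat.le_induction with
  | base =>
    simpa [Real.log_div, hm'.ne', (by positivity : (m : ℝ) + 1 ≠ 0)] using
      inv_add_one_lt_log_add_one_sub_log hm'
  | succ n hmn ih =>
    have hn : (0 : ℝ) < n := by exact_mod_cast hm.trans hmn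
    have := inv_add_one_lt_log_add_one_sub_log hn
    rw [Real.log_div hn.ne' hm'.ne'] at ih
    rw [harmonic_succ, Real.log_div (by positivity) hm'.ne']
    push_cast at ih this ⊢
    linarith

theorem stmt4 (k : ℕ) (hk : 1 ≤ k) (b0 : ℝ)
    (hb0 : b0 = 2 * ((Nat.choose (2*k) k : ℝ))⁻¹ *
      ∑ j ∈ Finset.Icc 1 k, (-1 : ℝ) ^ (j+1) * (Nat.choose (2*k) (k-j) : ℝ) / (j : ℝ)) :
    0 < b0 ∧ b0 < 2 * Real.log 2 := by
  have hk2 : k < 2 * k := by omega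
  have hb : b0 = 2 * ((harmonic (2 * k) - harmonic k : ℚ) : ℝ) := by
    have hsum := congrArg (Rat.cast : ℚ → ℝ) (altChooseSum_eq hk2.le)
    rw [show 2 * k - k = k by omega] at hsum
    have hC : ((2 * k).choose k : ℝ) ≠ 0 := Nat.cast_ne_zero.2 (Nat.choose_pos hk2.le).ne'
    push_cast [altChooseSum] at hsum ⊢
    rw [hb0, hsum]
    field_simp
  have hlog : Real.log ((2 * k : ℕ) / k : ℝ) = Real.log 2 := by
    push_cast
    rw [mul_div_cancel_right₀ _ (by positivity)]
  have hpos := harmonic_strictMono hk2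
  have hlt := harmonic_sub_harmonic_lt_log_div hk hk2
  rw [hlog] at hlt
  constructor
  · rw [hb]; exact_mod_cast mul_pos two_pos (sub_pos.2 hpos)
  · rw [hb]; linarith
end

section
/- With b_i as defined from the Favard-type kernel, one has 0 > b_1 > 2 ln 2 − π²/6 for all k ≥ 2. -/
open Real

/-!
Let `D k` be the sum defining `b₁` divided by `C(2k, k)`. The relation
`C(2k+2, k+1-j) ((k+1)² - j²) = (2k+1)(2k+2) C(2k, k-j)` turns `D (k+1) - D k` into a multiple of
the alternating sum `∑ⱼ (-1)ʲ C(2k+2, k+1-j) (j-1)`, which telescopes (Gosper). Hence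
`D (k+1) - D k = -k / (2(2k+1)(k+1)²)` and `b₁ = -∑_{m<k} m / ((2m+1)(m+1)²)`. These terms are
nonnegative and equal `1/(m+1)² - 2 (1/(2m+1) - 1/(2m+2))`, so the whole series sums to
`π²/6 - 2 log 2`, and for `k ≥ 2` the partial sum lies strictly between `0` and that value.
-/

open Finset Filter Topology

theorem choose_two_mul_add_one_sub_mul {n j : ℕ} (h : j ≤ n) :
    ((2 * n).choose (n + 1 - j) : ℝ) * ((n : ℝ) + 1 - j) =
      (2 * n).choose (n - j) * ((n : ℝ) + j) := by
  have key := Nat.choose_succ_right_eq (2 * n) (n - j)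
  rw [show n - j + 1 = n + 1 - j by omega] at key
  have := congrArg (Nat.cast : ℕ → ℝ) key
  push_cast [Nat.cast_sub (show j ≤ n + 1 by omega), Nat.cast_sub h,
    Nat.cast_sub (show n - j ≤ 2 * n by omega)] at this
  linear_combination this

theorem choose_two_mul_succ_mul_sq_sub_sq {n j : ℕ} (h : j ≤ n) :
    ((2 * (n + 1)).choose (n + 1 - j) : ℝ) * (((n : ℝ) + 1) ^ 2 - j ^ 2) =
      (2 * n + 1) * (2 * n + 2) * (2 * n).choose (n - j) := by
  have h₁ := Nat.add_one_mul_choose_eq (2 * n + 1) (n - j)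
  have h₂ := Nat.choose_mul_succ_eq (2 * n) (n - j)
  rw [show n - j + 1 = n + 1 - j by omega, show 2 * n + 1 + 1 = 2 * (n + 1) by ring] at h₁
  rw [show 2 * n + 1 - (n - j) = n + 1 + j by omega] at h₂
  have e₁ := congrArg (Nat.cast : ℕ → ℝ) h₁
  have e₂ := congrArg (Nat.cast : ℕ → ℝ) h₂
  push_cast [Nat.cast_sub (show j ≤ n + 1 by omega), Nat.cast_sub h] at e₁ e₂
  linear_combination -((n : ℝ) + 1 + j) * e₁ - (2 * n + 2) * e₂

theorem alternating_sum_choose_mul_sub_one (n : ℕ) :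
    2 * (2 * n + 1) * ∑ j ∈ Icc 1 (n + 1),
        (-1 : ℝ) ^ j * (2 * (n + 1)).choose (n + 1 - j) * ((j : ℝ) - 1) =
      n * (2 * (n + 1)).choose (n + 1) := by
  set N := n + 1 with hN
  -- Gosper's certificate for the summand
  let G : ℕ → ℝ := fun j ↦
    (-1) ^ (j + 1) * (2 * N).choose (N + 1 - j) * ((N : ℝ) + 1 - j) * (2 * N * j - 3 * N + 1)
  have hG : ∀ j ∈ Icc 1 N, G (j + 1) - G j =
      2 * N * (2 * N - 1) * ((-1) ^ j * (2 * N).choose (N - j) * ((j : ℝ) - 1)) := by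
    intro j hj
    have hjN := (mem_Icc.mp hj).2
    simp only [G, show N + 1 - (j + 1) = N - j by omega]
    push_cast
    linear_combination
      (-(-1) ^ (j + 1) * (2 * N * j - 3 * N + 1 : ℝ)) * choose_two_mul_add_one_sub_mul hjN
  have htel := sum_Icc_sub (f := G) (show 1 ≤ N by omega)
  rw [sum_congr rfl hG, ← mul_sum] at htel
  simp only [G, Nat.sub_self, Nat.choose_zero_right, Nat.add_sub_cancel] at htel
  push_cast at htel
  refine mul_left_cancel₀ (show (N : ℝ) ≠ 0 by positivity) ?_
  rw [hN] at htel ⊢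
  push_cast at htel ⊢
  linear_combination htel

noncomputable def favardSum (k : ℕ) : ℝ :=
  ∑ j ∈ Icc 1 k, (-1 : ℝ) ^ (j + 1) * (2 * k).choose (k - j) * (((j : ℝ) - 1) / j ^ 2)

noncomputable def favardTerm (m : ℕ) : ℝ := m / ((2 * m + 1) * ((m : ℝ) + 1) ^ 2)

theorem favardSum_succ (k : ℕ) :
    ((k : ℝ) + 1) ^ 2 * favardSum (k + 1) - (2 * k + 1) * (2 * k + 2) * favardSum k =
      -∑ j ∈ Icc 1 (k + 1),
        (-1 : ℝ) ^ j * (2 * (k + 1)).choose (k + 1 - j) * ((j : ℝ) - 1) := by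
  simp only [favardSum]
  rw [sum_Icc_succ_top (by omega), sum_Icc_succ_top (by omega), mul_add, mul_sum, mul_sum,
    neg_add, ← sum_neg_distrib, add_sub_right_comm, ← sum_sub_distrib]
  congr 1
  · refine sum_congr rfl fun j hj ↦ ?_
    obtain ⟨hj₁, hjk⟩ := mem_Icc.mp hj
    have hj₀ : (j : ℝ) ≠ 0 := by positivity
    linear_combination (norm := skip)
      (-1 : ℝ) ^ (j + 1) * ((j - 1) / j ^ 2) * choose_two_mul_succ_mul_sq_sub_sq hjk
    field_simp
    ring
  · simp only [Nat.sub_self, Nat.choose_zero_right]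
    push_cast
    field_simp
    ring

theorem favardSum_eq (k : ℕ) :
    favardSum k = -((2 * k).choose k / 2) * ∑ m ∈ range k, favardTerm m := by
  induction k with
  | zero => simp [favardSum]
  | succ k ih =>
    have hstep := favardSum_succ k
    have hsum := alternating_sum_choose_mul_sub_one k
    have hcentral := choose_two_mul_succ_mul_sq_sub_sq (Nat.zero_le k)
    simp only [Nat.sub_zero, Nat.cast_zero] at hcentral
    rw [ih] at hstep
    rw [sum_range_succ, favardTerm]
    have hk : ((k : ℝ) + 1) ^ 2 ≠ 0 := by positivity
    have hk' : (2 * (k : ℝ) + 1) ≠ 0 := by positivity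
    refine mul_left_cancel₀ hk ?_
    linear_combination (norm := skip)
      hstep + (∑ m ∈ range k, favardTerm m) / 2 * hcentral - hsum / (2 * (2 * k + 1))
    field_simp
    ring

theorem sum_Icc_two_eq_favardSum (k : ℕ) :
    ∑ j ∈ Icc 2 k,
        (-1 : ℝ) ^ (j + 1) * (2 * k).choose (k - j) * ((1 / (j : ℝ)) * (1 - 1 / j)) =
      favardSum k := by
  rw [favardSum, ← sum_subset (Icc_subset_Icc_left one_le_two)]
  · refine sum_congr rfl fun j hj ↦ ?_
    have : (j : ℝ) ≠ 0 := by have := (mem_Icc.mp hj).1; positivity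
    field_simp
  · intro j hj hj'
    obtain rfl : j = 1 := by simp only [mem_Icc] at hj hj'; omega
    simp

theorem sum_range_alternating_harmonic (n : ℕ) :
    ∑ m ∈ range n, (1 / (2 * (m : ℝ) + 1) - 1 / (2 * m + 2)) =
      (harmonic (2 * n) : ℝ) - harmonic n := by
  induction n with
  | zero => simp
  | succ n ih =>
    rw [sum_range_succ, ih, show 2 * (n + 1) = 2 * n + 1 + 1 by ring, harmonic_succ, harmonic_succ,
      harmonic_succ]
    push_cast
    field_simp
    ring

theorem tendsto_harmonic_two_mul_sub_harmonic :
    Tendsto (fun n : ℕ ↦ (harmonic (2 * n) : ℝ) - harmonic n) atTop (𝓝 (log 2)) := by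
  have h := (tendsto_harmonic_sub_log.comp (tendsto_id.const_mul_atTop' two_pos)).sub
    tendsto_harmonic_sub_log
  rw [sub_self] at h
  refine (zero_add (log 2) ▸ h.add_const (log 2)).congr' ?_
  filter_upwards [eventually_ne_atTop 0] with n hn
  have : (n : ℝ) ≠ 0 := by exact_mod_cast hn
  simp only [Function.comp_apply, id_eq, Nat.cast_mul, Nat.cast_ofNat, log_mul two_ne_zero this]
  ring

theorem hasSum_alternating_harmonic :
    HasSum (fun m : ℕ ↦ 1 / (2 * (m : ℝ) + 1) - 1 / (2 * m + 2)) (log 2) := by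
  rw [hasSum_iff_tendsto_nat_of_nonneg fun m ↦ sub_nonneg.2 <|
    one_div_le_one_div_of_le (by positivity) (by linarith)]
  simpa only [sum_range_alternating_harmonic] using tendsto_harmonic_two_mul_sub_harmonic

theorem hasSum_one_div_succ_sq : HasSum (fun m : ℕ ↦ 1 / ((m : ℝ) + 1) ^ 2) (π ^ 2 / 6) := by
  simpa using (hasSum_nat_add_iff' 1).mpr hasSum_zeta_two

theorem hasSum_favardTerm : HasSum favardTerm (π ^ 2 / 6 - 2 * log 2) := by
  have h := hasSum_one_div_succ_sq.sub (hasSum_alternating_harmonic.mul_left 2)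
  refine h.congr_fun fun m ↦ ?_
  rw [favardTerm]
  field_simp
  ring

theorem favardTerm_nonneg (m : ℕ) : 0 ≤ favardTerm m := by
  unfold favardTerm; positivity

theorem favardTerm_pos {m : ℕ} (hm : 0 < m) : 0 < favardTerm m := by
  unfold favardTerm; positivity

theorem stmt5 (k : ℕ) (hk : 2 ≤ k) (b1 : ℝ)
    (hb1 : b1 = 2 * ((Nat.choose (2*k) k : ℝ))⁻¹ *
      ∑ j ∈ Finset.Icc 2 k, (-1 : ℝ) ^ (j+1) * (Nat.choose (2*k) (k-j) : ℝ) *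
        ((1 / (j : ℝ)) * (1 - 1 / (j : ℝ)))) :
    b1 < 0 ∧ 2 * Real.log 2 - π^2 / 6 < b1 := by
  have hcentral : ((2 * k).choose k : ℝ) ≠ 0 := by
    exact_mod_cast (Nat.choose_pos (by omega)).ne'
  have hb : b1 = -∑ m ∈ range k, favardTerm m := by
    rw [hb1, sum_Icc_two_eq_favardSum, favardSum_eq]
    field_simp
  have hpos : 0 < ∑ m ∈ range k, favardTerm m :=
    sum_pos' (fun m _ ↦ favardTerm_nonneg m)
      ⟨1, mem_range.2 (by omega), favardTerm_pos one_pos⟩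
  have hlt : ∑ m ∈ range k, favardTerm m < π ^ 2 / 6 - 2 * log 2 :=
    calc ∑ m ∈ range k, favardTerm m
        < ∑ m ∈ range (k + 1), favardTerm m := by
          rw [sum_range_succ]; linarith [favardTerm_pos (show 0 < k by omega)]
      _ ≤ π ^ 2 / 6 - 2 * log 2 :=
          sum_le_hasSum _ (fun m _ ↦ favardTerm_nonneg m) hasSum_favardTerm
  constructor <;> linarith
end

section
/- For α > 1, sec(π/(2α)) ≤ (4/π)(1 − α^{-2})^{-1}. -/
/-! Put `s = α⁻¹ ∈ (0, 1)`. It suffices that `cos (π s / 2) ≥ (π / 4) (1 - s²)`, i.e. with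
`t = π (1 - s) / 2 ∈ [0, π/2)`, that `sin t ≥ t - t² / π`. The parabola `t - t² / π` lies below
the Taylor bound `t - t³ / 6` for `t ≤ 6 / π`, and below Jordan's bound `2 t / π` for `t ≥ π - 2`;
these two ranges cover `[0, π/2]`. -/

open Real

theorem sub_sq_div_pi_le_sin {t : ℝ} (ht₀ : 0 ≤ t) (ht₁ : t ≤ π / 2) : t - t ^ 2 / π ≤ sin t := by
  have hπ₀ := pi_pos
  have hπ₁ := pi_lt_d2
  rcases le_total t (π - 2) with ht | ht
  · have hcube : t ^ 3 / 6 ≤ t ^ 2 / π := by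
      rw [div_le_div_iff₀ (by norm_num) hπ₀]
      nlinarith [mul_nonneg (sq_nonneg t) (by nlinarith : 0 ≤ 6 - t * π)]
    linarith [sin_ge_sub_cube ht₀]
  · have hjordan : t - t ^ 2 / π ≤ 2 / π * t := by
      rw [div_mul_eq_mul_div, sub_le_iff_le_add, ← add_div, le_div_iff₀ hπ₀]
      nlinarith
    linarith [mul_le_sin ht₀ ht₁]

theorem pi_div_four_mul_one_sub_sq_le_cos {s : ℝ} (hs₀ : 0 ≤ s) (hs₁ : s ≤ 1) :
    π / 4 * (1 - s ^ 2) ≤ cos (π / 2 * s) := by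
  have key := sub_sq_div_pi_le_sin (t := π / 2 * (1 - s))
    (by nlinarith [pi_pos]) (by nlinarith [pi_pos])
  rw [mul_one_sub, sin_pi_div_two_sub] at key
  convert key using 1
  field_simp
  ring

theorem stmt16 (α : ℝ) (hα : 1 < α) :
    (Real.cos (π / (2 * α)))⁻¹ ≤ (4 / π) * (1 - (α ^ 2)⁻¹)⁻¹ := by
  have hs₀ : 0 < α⁻¹ := inv_pos.mpr (by linarith)
  have hs₁ : α⁻¹ < 1 := inv_lt_one_of_one_lt₀ hα
  have hbound := pi_div_four_mul_one_sub_sq_le_cos hs₀.le hs₁.le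
  have hpos : 0 < π / 4 * (1 - α⁻¹ ^ 2) :=
    mul_pos (by positivity) (sub_pos.mpr (pow_lt_one₀ hs₀.le hs₁ two_ne_zero))
  rw [show π / (2 * α) = π / 2 * α⁻¹ by ring, ← inv_pow]
  calc (cos (π / 2 * α⁻¹))⁻¹ ≤ (π / 4 * (1 - α⁻¹ ^ 2))⁻¹ := inv_anti₀ hpos hbound
    _ = 4 / π * (1 - α⁻¹ ^ 2)⁻¹ := by rw [mul_inv, inv_div]
end
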